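/- arXiv:math/0603343 — 2 statements merged into one kernel-verified Lean document; each statement's English description precedes it below -/
import Mathlib

section
/- In the Frohman–Gelca algebra A_t (t nonzero, not a root of unity), for integers x, y, z, w with x + z even, y + w even, and xw - yz ≠ 0, the cosets of e_{(x,y)} and e_{(z,w)} agree in the quotient A_t/C(A_t), where C(A_t) is the linear span of commutators. -/
noncomputable section

def negRel : Setoid (ℤ × ℤ) where
  r v w := v = w ∨ v = -w
  iseqv := by
    refine ⟨fun v => Or.inl rfl, ?_, ?_⟩
    · rintro v w (rfl | rfl) <;> simp
    · rintro u v w (rfl | rfl) (h | h) <;> simp_all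

/-- The index set `ℤ² / ±1`. -/
abbrev Q2 := Quotient negRel

/-- The underlying vector space of the Frohman–Gelca algebra: the free `ℂ`-module on `ℤ²/±1`. -/
abbrev FG := Q2 →₀ ℂ

/-- The basis vector `e_{(p,q)}`. -/
def e (v : ℤ × ℤ) : FG := Finsupp.single (Quotient.mk negRel v) 1

lemma e_neg (v : ℤ × ℤ) : e (-v) = e v := by
  unfold e
  congr 1
  exact Quotient.sound (Or.inr rfl)

/-- The determinant `p s - q r`. -/
def det (v w : ℤ × ℤ) : ℤ := v.1 * w.2 - v.2 * w.1

/-- Product-to-sum formula on representatives. -/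
def mulB (t : ℂ) (v w : ℤ × ℤ) : FG :=
  t ^ (det v w) • e (v + w) + t ^ (-(det v w)) • e (v - w)

lemma mulB_negL (t : ℂ) (v w : ℤ × ℤ) : mulB t (-v) w = mulB t v w := by
  unfold mulB
  have hd : det (-v) w = -(det v w) := by simp [det]; ring
  rw [hd, neg_neg, show -v + w = -(v - w) by abel, show -v - w = -(v + w) by abel,
    e_neg, e_neg, add_comm]

lemma mulB_negR (t : ℂ) (v w : ℤ × ℤ) : mulB t v (-w) = mulB t v w := by
  unfold mulB
  have hd : det v (-w) = -(det v w) := by simp [det]; ring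
  rw [hd, neg_neg, show v + -w = v - w by abel, show v - -w = v + w by abel, add_comm]

/-- Product-to-sum formula on the quotient `ℤ²/±1`. -/
def qmulB (t : ℂ) : Q2 → Q2 → FG :=
  Quotient.lift₂ (mulB t) (by
    rintro a b a' b' (rfl | rfl) (rfl | rfl)
    · rfl
    · rw [mulB_negR]
    · rw [mulB_negL]
    · rw [mulB_negL, mulB_negR])

/-- Multiplication in the Frohman–Gelca algebra, extended bilinearly. -/
def fgMul (t : ℂ) (a b : FG) : FG :=
  a.sum fun x c => b.sum fun y d => (c * d) • qmulB t x y

/-- The span of commutators `C(A_t)`. -/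
def commSpan (t : ℂ) : Submodule ℂ FG :=
  Submodule.span ℂ {x | ∃ a b : FG, x = fgMul t a b - fgMul t b a}



lemma fgMul_e (t : ℂ) (v w : ℤ × ℤ) : fgMul t (e v) (e w) = mulB t v w := by
  simp [fgMul, e, Finsupp.sum_single_index]
  rfl

lemma comm_eq (t : ℂ) (v w : ℤ × ℤ) :
    fgMul t (e v) (e w) - fgMul t (e w) (e v)
      = (t ^ det v w - t ^ (-det v w)) • (e (v + w) - e (v - w)) := by
  rw [fgMul_e, fgMul_e]
  unfold mulB
  have h1 : det w v = -det v w := by simp [det]; ring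
  rw [h1, neg_neg, show w + v = v + w by abel, show w - v = -(v - w) by abel, e_neg]
  module

theorem stmt5 (t : ℂ) (ht : t ≠ 0) (hroot : ∀ n : ℕ, 0 < n → t ^ n ≠ 1)
    (x y z w : ℤ) (hx : Even (x + z)) (hy : Even (y + w))
    (hdet : x * w - y * z ≠ 0) :
    (Submodule.Quotient.mk (e (x, y)) : FG ⧸ commSpan t) =
      Submodule.Quotient.mk (e (z, w)) := by
  obtain ⟨p, hp⟩ := hx
  obtain ⟨q, hq⟩ := hy
  set r : ℤ := x - p with hr
  set s : ℤ := y - q with hs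
  set d : ℤ := det (p, q) (r, s) with hd
  have hdval : d = p * y - q * x := by simp [hd, det, hr, hs]; ring
  have hzw : x * w - y * z = -2 * d := by
    have hz : z = p + p - x := by omega
    have hw : w = q + q - y := by omega
    rw [hz, hw, hdval]; ring
  have hdne : d ≠ 0 := by intro h; rw [h] at hzw; omega
  set c : ℂ := t ^ d - t ^ (-d) with hc
  have hcne : c ≠ 0 := by
    intro h
    have h2 : t ^ (2 * d) = 1 := by
      have h1 : t ^ d = t ^ (-d) := by
        have := sub_eq_zero.mp h; exact this
      calc t ^ (2 * d) = t ^ d * t ^ d := by rw [two_mul, zpow_add₀ ht]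
        _ = t ^ (-d) * t ^ d := by rw [h1]
        _ = 1 := by rw [← zpow_add₀ ht]; simp
    have h3 : t ^ ((2 * d.natAbs : ℕ) : ℤ) = 1 := by
      rcases le_or_gt 0 d with hle | hlt
      · have he : ((2 * d.natAbs : ℕ) : ℤ) = 2 * d := by omega
        rw [he]; exact h2
      · have he : ((2 * d.natAbs : ℕ) : ℤ) = -(2 * d) := by omega
        rw [he, zpow_neg, h2, inv_one]
    rw [zpow_natCast] at h3
    exact hroot (2 * d.natAbs) (by positivity) h3
  have hmem : fgMul t (e (p, q)) (e (r, s)) - fgMul t (e (r, s)) (e (p, q)) ∈ commSpan t :=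
    Submodule.subset_span ⟨e (p, q), e (r, s), rfl⟩
  have hsum : ((p, q) : ℤ × ℤ) + (r, s) = (x, y) := by
    simp only [Prod.mk_add_mk, Prod.mk.injEq]; omega
  have hdiff : ((p, q) : ℤ × ℤ) - (r, s) = (z, w) := by
    simp only [Prod.mk_sub_mk, Prod.mk.injEq]; omega
  have key : e (x, y) - e (z, w)
      = c⁻¹ • (fgMul t (e (p, q)) (e (r, s)) - fgMul t (e (r, s)) (e (p, q))) := by
    rw [comm_eq, ← hd, ← hc, smul_smul, inv_mul_cancel₀ hcne, one_smul, hsum, hdiff]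
  rw [Submodule.Quotient.eq, key]
  exact Submodule.smul_mem _ _ hmem

end
end

section
/- For each of the five classes c ∈ {φ, ee, eo, oe, oo}, the linear functional φ_c : A_t → ℂ that returns the sum of the coefficients of basis elements e_{(p,q)} in class c is a trace: φ_c(a*b) = φ_c(b*a) for all a, b ∈ A_t. -/
noncomputable section

/-- The class of a pair: `0` for `(0,0)`, then `ee`, `eo`, `oe`, `oo`. -/
def cls (v : ℤ × ℤ) : Fin 5 :=
  if v = 0 then 0
  else if Even v.1 then (if Even v.2 then 1 else 2)
  else if Even v.2 then 3 else 4

def qcls : Q2 → Fin 5 :=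
  Quotient.lift cls (by
    rintro a b (rfl | rfl)
    · rfl
    · simp [cls, neg_eq_zero, Prod.fst_neg, Prod.snd_neg])

/-- The parity map `φ : A_t → ℂ⁵`. -/
def phiL : FG →ₗ[ℂ] (Fin 5 → ℂ) :=
  Finsupp.lsum ℂ fun x => LinearMap.toSpanSingleton ℂ (Fin 5 → ℂ) (Pi.single (qcls x) 1)

lemma phiL_e (u : ℤ × ℤ) : phiL (e u) = Pi.single (cls u) 1 := by
  simp [phiL, e, qcls, Quotient.lift_mk]

lemma cls_add_eq_sub (v w : ℤ × ℤ) (hd : det v w ≠ 0) : cls (v + w) = cls (v - w) := by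
  have h1 : v + w ≠ 0 := by
    intro h
    apply hd
    have : w = -v := eq_neg_of_add_eq_zero_right h
    subst this; simp [det]; ring
  have h2 : v - w ≠ 0 := by
    intro h
    apply hd
    have : w = v := by
      have := sub_eq_zero.mp h
      exact this.symm
    subst this; simp [det]; ring
  have e1 : Even (v + w).1 ↔ Even (v - w).1 := by
    simp only [Prod.fst_add, Prod.fst_sub, Int.even_add, Int.even_sub]
  have e2 : Even (v + w).2 ↔ Even (v - w).2 := by
    simp only [Prod.snd_add, Prod.snd_sub, Int.even_add, Int.even_sub]
  simp only [cls, if_neg h1, if_neg h2, e1, e2]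

lemma key (t : ℂ) (v w : ℤ × ℤ) : phiL (mulB t v w) = phiL (mulB t w v) := by
  have hdet : det w v = -(det v w) := by simp [det]; ring
  have hsub : w - v = -(v - w) := by abel
  simp only [mulB, map_add, map_smul, hdet, neg_neg, add_comm w v, hsub, e_neg]
  by_cases hd : det v w = 0
  · rw [hd]; simp [add_comm]
  · rw [phiL_e, phiL_e, cls_add_eq_sub v w hd]
    module

lemma qkey (t : ℂ) (x y : Q2) : phiL (qmulB t x y) = phiL (qmulB t y x) := by
  induction x using Quotient.inductionOn with
  | h v =>
    induction y using Quotient.inductionOn with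
    | h w => exact key t v w

theorem stmt12 (t : ℂ) (ht : t ≠ 0) (hroot : ∀ n : ℕ, 0 < n → t ^ n ≠ 1)
    (i : Fin 5) (a b : FG) :
    phiL (fgMul t a b) i = phiL (fgMul t b a) i := by
  have : phiL (fgMul t a b) = phiL (fgMul t b a) := by
    unfold fgMul
    simp only [map_finsuppSum, map_smul]
    rw [Finsupp.sum_comm]
    refine Finsupp.sum_congr fun x _ => Finsupp.sum_congr fun y _ => ?_
    rw [mul_comm, qkey]
  rw [this]

end
end
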